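/- Let ψ_j be a sequence of smooth functions on [−δ, δ] × M (M compact) that are convex in the first variable t uniformly up to error ε_j (i.e. ∂²_t ψ_j + ε_j ≥ 0 with ε_j → 0) and converging uniformly to a function φ independent of t. Then ∂_t ψ_j(0, ·) → 0 uniformly on M. -/

import Mathlib

open Filter Set

/-! Adding `ε t²` makes `t ↦ ψ_j(t, x)` convex, so its derivative at `0` lies between the
difference quotients over `[-δ, 0]` and `[0, δ]`, up to an error `ε δ` from the quadratic term.
Uniform closeness of `ψ_j` to the `t`-independent `φ` makes both quotients small. -/

section AlmostConvex

variable {f : ℝ → ℝ} {f' ε δ : ℝ}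

lemma div_sub_le_and_le_div_add_of_convexOn_add_sq (hδ : 0 < δ) (hf : HasDerivAt f f' 0)
    (hconv : ConvexOn ℝ (Icc (-δ) δ) (fun t => f t + ε * t ^ 2)) :
    (f 0 - f (-δ)) / δ - ε * δ ≤ f' ∧ f' ≤ (f δ - f 0) / δ + ε * δ := by
  have hq : HasDerivAt (fun t : ℝ => ε * t ^ 2) 0 0 := by
    simpa using (hasDerivAt_pow 2 (0 : ℝ)).const_mul ε
  have hg := (hf.add hq).congr_deriv (add_zero f')
  have h0 : (0 : ℝ) ∈ Icc (-δ) δ := ⟨by linarith, hδ.le⟩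
  have hlo := hconv.slope_le_of_hasDerivAt ⟨le_rfl, by linarith⟩ h0 (by linarith) hg
  have hup := hconv.le_slope_of_hasDerivAt h0 ⟨by linarith, le_rfl⟩ hδ hg
  simp only [slope_def_field] at hlo hup
  constructor
  · convert hlo using 1
    rw [div_sub' hδ.ne']; congr 1 <;> ring
  · convert hup using 1
    rw [div_add' _ _ _ hδ.ne']; congr 1 <;> ring

lemma abs_le_of_convexOn_add_sq_of_abs_sub_le {a η : ℝ} (hδ : 0 < δ) (hf : HasDerivAt f f' 0)
    (hconv : ConvexOn ℝ (Icc (-δ) δ) (fun t => f t + ε * t ^ 2))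
    (hclose : ∀ t ∈ Icc (-δ) δ, |f t - a| ≤ η) :
    |f'| ≤ 2 * η / δ + ε * δ := by
  obtain ⟨hlo, hup⟩ := div_sub_le_and_le_div_add_of_convexOn_add_sq hδ hf hconv
  obtain ⟨hm₁, hm₂⟩ := abs_le.mp (hclose (-δ) ⟨le_rfl, by linarith⟩)
  obtain ⟨h0₁, h0₂⟩ := abs_le.mp (hclose 0 ⟨by linarith, hδ.le⟩)
  obtain ⟨hp₁, hp₂⟩ := abs_le.mp (hclose δ ⟨by linarith, le_rfl⟩)
  refine abs_le.mpr ⟨?_, ?_⟩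
  · calc -(2 * η / δ + ε * δ) = -(2 * η) / δ - ε * δ := by ring
      _ ≤ (f 0 - f (-δ)) / δ - ε * δ := by gcongr; linarith
      _ ≤ f' := hlo
  · calc f' ≤ (f δ - f 0) / δ + ε * δ := hup
      _ ≤ 2 * η / δ + ε * δ := by gcongr; linarith

end AlmostConvex

theorem deriv_tendsto_zero_of_almost_convex_general {M : Type*}
    (δ : ℝ) (hδ : 0 < δ) (ψ ψ' : ℕ → ℝ → M → ℝ) (ε : ℕ → ℝ) (φ : M → ℝ)
    (hε : Tendsto ε atTop (nhds 0))
    (hderiv : ∀ j x t, HasDerivAt (fun s => ψ j s x) (ψ' j t x) t)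
    (hconv : ∀ j x, ConvexOn ℝ (Set.Icc (-δ) δ) (fun t => ψ j t x + ε j * t^2))
    (hunif : ∀ c > (0:ℝ), ∃ N, ∀ j ≥ N, ∀ t ∈ Set.Icc (-δ) δ, ∀ x, |ψ j t x - φ x| ≤ c) :
    ∀ c > (0:ℝ), ∃ N, ∀ j ≥ N, ∀ x, |ψ' j 0 x| ≤ c := by
  intro c hc
  obtain ⟨N₁, hN₁⟩ := hunif (c * δ / 4) (by positivity)
  have hεδ : Tendsto (fun j => ε j * δ) atTop (nhds 0) := by simpa using hε.mul_const δ
  obtain ⟨N₂, hN₂⟩ := eventually_atTop.mp (hεδ.eventually (eventually_le_nhds (half_pos hc)))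
  refine ⟨max N₁ N₂, fun j hj x => ?_⟩
  calc |ψ' j 0 x| ≤ 2 * (c * δ / 4) / δ + ε j * δ :=
        abs_le_of_convexOn_add_sq_of_abs_sub_le hδ (hderiv j x 0) (hconv j x)
          (fun t ht => hN₁ j (le_of_max_le_left hj) t ht x)
    _ = c / 2 + ε j * δ := by field_simp; ring
    _ ≤ c / 2 + c / 2 := by gcongr; exact hN₂ j (le_of_max_le_right hj)
    _ = c := add_halves c

/-- If `ψ_j(t,x)` are convex in `t` up to error `ε_j → 0` on `[-δ,δ]` and converge uniformly
to a `t`-independent function `φ`, then the `t`-derivatives `∂_t ψ_j(0,·)` tend to `0`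
uniformly on `M`. -/
theorem deriv_tendsto_zero_of_almost_convex {M : Type*} [TopologicalSpace M] [CompactSpace M]
    (δ : ℝ) (hδ : 0 < δ) (ψ ψ' : ℕ → ℝ → M → ℝ) (ε : ℕ → ℝ) (φ : M → ℝ)
    (hε0 : ∀ j, 0 ≤ ε j) (hε : Tendsto ε atTop (nhds 0))
    (hderiv : ∀ j x t, HasDerivAt (fun s => ψ j s x) (ψ' j t x) t)
    (hconv : ∀ j x, ConvexOn ℝ (Set.Icc (-δ) δ) (fun t => ψ j t x + ε j * t^2))
    (hunif : ∀ c > (0:ℝ), ∃ N, ∀ j ≥ N, ∀ t ∈ Set.Icc (-δ) δ, ∀ x, |ψ j t x - φ x| ≤ c) :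
    ∀ c > (0:ℝ), ∃ N, ∀ j ≥ N, ∀ x, |ψ' j 0 x| ≤ c :=
  deriv_tendsto_zero_of_almost_convex_general δ hδ ψ ψ' ε φ hε hderiv hconv hunif
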